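/- arXiv:0912.5220 — 2 statements merged into one kernel-verified Lean document; each statement's English description precedes it below -/
import Mathlib

section
/- Suppose p is a-hyperbolic with Gårding cone Γ. Then: (a) Γ is a convex subset of ℝⁿ; (b) the smallest ordered eigenvalue function x ↦ λ↑₁(x) = λ_min(x) is concave on ℝⁿ; and (c) the largest ordered eigenvalue function x ↦ λ↑ₘ(x) = λ_max(x) is convex on ℝⁿ. -/
open MvPolynomial

/-- `lam : Fin m → ℝ` is a tuple of `a`-eigenvalues of `x` for the polynomial `p`:
`p(t·a + x) = p(a)·∏ₖ (t + lamₖ)` for all real `t`. -/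
def IsEigen {n : ℕ} (m : ℕ) (p : MvPolynomial (Fin n) ℝ) (a x : Fin n → ℝ)
    (lam : Fin m → ℝ) : Prop :=
  ∀ t : ℝ, eval (t • a + x) p = eval a p * ∏ k, (t + lam k)

/-- `p` is `a`-hyperbolic (of degree `m`): `p(a) > 0` and every `x` has `m` real
`a`-eigenvalues. -/
def IsHyperbolic {n : ℕ} (m : ℕ) (p : MvPolynomial (Fin n) ℝ) (a : Fin n → ℝ) : Prop :=
  0 < eval a p ∧ ∀ x : Fin n → ℝ, ∃ lam : Fin m → ℝ, IsEigen m p a x lam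

/-- The open Gårding cone: the set of `x` all of whose `a`-eigenvalues are positive. -/
def GardingCone {n : ℕ} (m : ℕ) (p : MvPolynomial (Fin n) ℝ) (a : Fin n → ℝ) :
    Set (Fin n → ℝ) :=
  {x | ∃ lam : Fin m → ℝ, IsEigen m p a x lam ∧ ∀ k, 0 < lam k}

-- The ordered (non-decreasing) arrangement `λ↑` of the `a`-eigenvalues of `x`
-- (defined via choice; for a hyperbolic `p` the monotone arrangement exists and is unique).
open scoped Classical in
noncomputable def ordEig {n : ℕ} (m : ℕ) (p : MvPolynomial (Fin n) ℝ) (a x : Fin n → ℝ) :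
    Fin m → ℝ :=
  if h : ∃ lam : Fin m → ℝ, Monotone lam ∧ IsEigen m p a x lam then h.choose
  else fun _ => 0

/-- The directional derivative `p'_b(a) = (d/ds) p(a + s·b) |_{s=0}`. -/
noncomputable def dirDeriv {n : ℕ} (p : MvPolynomial (Fin n) ℝ) (a b : Fin n → ℝ) : ℝ :=
  deriv (fun s : ℝ => eval (a + s • b) p) 0

/-!
Gårding's argument. Restrict `p` to complex lines `t ↦ p(u + t v)`; for homogeneous `p` these
are polynomials of degree `m` with leading coefficient `p(v)`, and their roots depend
continuously on `u`: the parameters for which a root lies in a closed (open) set form a closed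
(open) set. For `b ∈ Γ_a` the roots of `t ↦ p(u + i a + t b)` never cross the real axis, since
`p(x + i a) ≠ 0` for real `x`; at `u = 0` they lie in the lower half-plane, so by connectedness
of `ℝⁿ` they do for every `u`. Letting the imaginary part `i a` shrink to `0` and using that
real polynomials have conjugation-symmetric roots, all roots of `t ↦ p(y + t b)` are real: `p`
is `b`-hyperbolic. Each cone `Γ_c` is open, star-shaped about `c`, and closed in `{p ≠ 0}`,
hence is the connected component of `{p ≠ 0}` containing `c`. So `Γ_b = Γ_a` for every
`b ∈ Γ_a`, and `Γ_a`, being star-shaped about each of its points, is convex.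

Then `λ_min` is superadditive: `x - (λ_min x - ε) a` lies in the convex cone `Γ_a` for every
`ε > 0`, and cone membership is `λ_min > 0`. Together with positive homogeneity this is
concavity, and `λ_max x = -λ_min (-x)` is convex.
-/

open scoped Polynomial

namespace MvPolynomial

variable {σ R S : Type*} [CommSemiring R] [CommSemiring S] [Algebra R S] {p : MvPolynomial σ R}
  {m : ℕ}

theorem IsHomogeneous.sum_support_eq (hp : p.IsHomogeneous m) {d : σ →₀ ℕ}
    (hd : d ∈ p.support) : ∑ i ∈ d.support, d i = m := by
  rw [← Finsupp.degree_apply, Finsupp.degree_eq_weight_one]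
  exact hp (mem_support_iff.mp hd)

theorem IsHomogeneous.aeval_smul (hp : p.IsHomogeneous m) (c : S) (x : σ → S) :
    MvPolynomial.aeval (c • x) p = c ^ m * MvPolynomial.aeval x p := by
  simp only [aeval_def, eval₂_eq, Finset.mul_sum]
  refine Finset.sum_congr rfl fun d hd => ?_
  simp only [Pi.smul_apply, smul_eq_mul, mul_pow, Finset.prod_mul_distrib,
    Finset.prod_pow_eq_pow_sum, hp.sum_support_eq hd]
  ring

theorem IsHomogeneous.eval_smul (hp : p.IsHomogeneous m) (c : R) (x : σ → R) :
    eval (c • x) p = c ^ m * eval x p :=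
  hp.aeval_smul c x

theorem IsHomogeneous.natDegree_aeval_le (hp : p.IsHomogeneous m) {f : σ → S[X]}
    (hf : ∀ i, (f i).natDegree ≤ 1) : (MvPolynomial.aeval f p).natDegree ≤ m := by
  rw [aeval_def, eval₂_eq]
  refine Polynomial.natDegree_sum_le_of_forall_le _ _ fun d hd => ?_
  refine (Polynomial.natDegree_C_mul_le _ _).trans ((Polynomial.natDegree_prod_le _ _).trans ?_)
  rw [← hp.sum_support_eq hd]
  exact Finset.sum_le_sum fun i _ =>
    (Polynomial.natDegree_pow_le_of_le _ (hf i)).trans_eq (mul_one _)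

theorem aeval_ofReal_comp (p : MvPolynomial σ ℝ) (x : σ → ℝ) :
    aeval ((↑) ∘ x : σ → ℂ) p = eval x p :=
  aeval_algebraMap_apply (B := ℂ) x p

theorem aeval_ofReal_comp_ne_zero {p : MvPolynomial σ ℝ} {x : σ → ℝ} (hx : eval x p ≠ 0) :
    aeval ((↑) ∘ x : σ → ℂ) p ≠ 0 := by
  rw [aeval_ofReal_comp]
  exact_mod_cast hx

end MvPolynomial

namespace Polynomial

variable {K : Type*} [NormedField K]

theorem IsRoot.nnnorm_le {q : K[X]} {m : ℕ} (hdeg : q.natDegree ≤ m) (hc : q.coeff m ≠ 0)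
    {z : K} (hz : q.IsRoot z) :
    ‖z‖₊ ≤ (∑ k ∈ Finset.range m, ‖q.coeff k‖₊) / ‖q.coeff m‖₊ + 1 := by
  refine (hz.norm_lt_cauchyBound fun h => hc (by simp [h])).le.trans ?_
  rw [cauchyBound, leadingCoeff, natDegree_eq_of_le_of_coeff_ne_zero hdeg hc]
  gcongr
  exact Finset.sup_le fun k hk =>
    Finset.single_le_sum (f := fun k => ‖q.coeff k‖₊) (fun _ _ => zero_le) hk

theorem exists_isRoot_dist_lt [IsAlgClosed K] {q : K[X]} {m : ℕ} (hdeg : q.natDegree ≤ m)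
    {z₀ : K} {ε : ℝ} (hε : 0 ≤ ε) (h : ‖q.eval z₀‖ < ‖q.coeff m‖ * ε ^ m) :
    ∃ z, q.IsRoot z ∧ dist z z₀ < ε := by
  have hc : q.coeff m ≠ 0 := fun h0 => by
    rw [h0, norm_zero, zero_mul] at h
    exact (norm_nonneg _).not_gt h
  by_contra! hfar
  have hsplit := IsAlgClosed.splits q
  have hnorm := map_multiset_prod (normHom : K →*₀ ℝ) (q.roots.map (z₀ - ·))
  rw [Multiset.map_map] at hnorm
  rw [← natDegree_eq_of_le_of_coeff_ne_zero hdeg hc, ← leadingCoeff, hsplit.eval_eq_prod_roots,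
    norm_mul, hsplit.natDegree_eq_card_roots] at h
  have hle : (q.roots.map fun _ => ε).prod ≤ (q.roots.map (normHom ∘ (z₀ - ·))).prod :=
    Multiset.prod_map_le_prod_map₀ _ _ (fun _ _ => hε) fun r hr => by
      simpa [dist_comm, dist_eq_norm] using hfar r (isRoot_of_mem_roots hr)
  rw [Multiset.map_const', Multiset.prod_replicate] at hle
  exact h.not_ge (mul_le_mul_of_nonneg_left (hle.trans_eq hnorm.symm) (norm_nonneg _))

end Polynomial

section RootContinuity

open Filter Topology

variable {K Y : Type*} [NormedField K] [TopologicalSpace Y] {F : Y → K[X]} {m : ℕ} {c : K}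
  (hdeg : ∀ y, (F y).natDegree ≤ m) (hlead : ∀ y, (F y).coeff m = c)
  (hcont : ∀ k, Continuous fun y => (F y).coeff k)

include hdeg hcont in
theorem continuous_eval_of_continuous_coeff :
    Continuous fun q : Y × K => (F q.1).eval q.2 := by
  simp only [fun q : Y × K => Polynomial.eval_eq_sum_range' (Nat.lt_succ_of_le (hdeg q.1)) q.2]
  exact continuous_finsetSum _ fun k _ =>
    ((hcont k).comp continuous_fst).mul (continuous_snd.pow k)

include hdeg hlead hcont in
theorem isClosed_setOf_exists_isRoot_mem [SequentialSpace Y] [ProperSpace K] (hc : c ≠ 0)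
    {C : Set K} (hC : IsClosed C) : IsClosed {y | ∃ z ∈ C, (F y).IsRoot z} := by
  refine IsSeqClosed.isClosed fun ys y₀ hys hlim => ?_
  choose z hzC hz using hys
  have hbound : Continuous fun y => (∑ k ∈ Finset.range m, ‖(F y).coeff k‖₊) / ‖c‖₊ + 1 := by
    fun_prop
  obtain ⟨R, hR⟩ := ((hbound.tendsto y₀).comp hlim).bddAbove_range
  have hzR : ∀ j, z j ∈ Metric.closedBall (0 : K) R := fun j => by
    rw [mem_closedBall_zero_iff, ← coe_nnnorm, NNReal.coe_le_coe]
    have hzj := (hz j).nnnorm_le (hdeg (ys j)) ((hlead _).symm ▸ hc)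
    rw [hlead] at hzj
    exact hzj.trans (hR ⟨j, rfl⟩)
  obtain ⟨z₀, -, φ, hφ, hz₀⟩ := (isCompact_closedBall (0 : K) R).tendsto_subseq hzR
  refine ⟨z₀, hC.mem_of_tendsto hz₀ (Eventually.of_forall fun j => hzC (φ j)), ?_⟩
  have hev := ((continuous_eval_of_continuous_coeff hdeg hcont).tendsto (y₀, z₀)).comp
    ((hlim.comp hφ.tendsto_atTop).prodMk_nhds hz₀)
  exact tendsto_nhds_unique hev (by simp [Function.comp_def, (hz _).eq_zero])

include hdeg hlead hcont in
theorem isOpen_setOf_exists_isRoot_mem [IsAlgClosed K] (hc : c ≠ 0) {U : Set K}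
    (hU : IsOpen U) : IsOpen {y | ∃ z ∈ U, (F y).IsRoot z} := by
  refine isOpen_iff_mem_nhds.2 fun y₀ ⟨z₀, hz₀U, hz₀⟩ => ?_
  obtain ⟨ε, hε, hball⟩ := Metric.isOpen_iff.1 hU z₀ hz₀U
  have hsmall : ∀ᶠ y in 𝓝 y₀, ‖(F y).eval z₀‖ < ‖c‖ * ε ^ m := by
    have hev : Tendsto (fun y => (F y).eval z₀) (𝓝 y₀) (𝓝 0) := by
      rw [← hz₀.eq_zero]
      exact ((continuous_eval_of_continuous_coeff hdeg hcont).comp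
        (Continuous.prodMk_left z₀)).tendsto y₀
    refine hev.norm.eventually (gt_mem_nhds ?_)
    rw [norm_zero]
    exact mul_pos (norm_pos_iff.2 hc) (pow_pos hε m)
  filter_upwards [hsmall] with y hy
  obtain ⟨z, hz, hdist⟩ := Polynomial.exists_isRoot_dist_lt (hdeg y) hε.le (by rwa [hlead])
  exact ⟨z, hball hdist, hz⟩

end RootContinuity

section LinePoly

variable {σ : Type*}

noncomputable def linePoly (p : MvPolynomial σ ℝ) (u v : σ → ℂ) : ℂ[X] :=
  aeval (fun i => Polynomial.C (u i) + Polynomial.X * Polynomial.C (v i)) p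

variable {p : MvPolynomial σ ℝ}

theorem eval_linePoly (u v : σ → ℂ) (t : ℂ) :
    (linePoly p u v).eval t = aeval (u + t • v) p := by
  rw [linePoly, ← Polynomial.coe_aeval_eq_eval, ← AlgHom.coe_restrictScalars' ℝ,
    ← AlgHom.comp_apply, comp_aeval]
  congr 2
  funext i
  simp only [AlgHom.coe_restrictScalars', Polynomial.coe_aeval_eq_eval, Polynomial.eval_add,
    Polynomial.eval_mul, Polynomial.eval_C, Polynomial.eval_X, Pi.add_apply, Pi.smul_apply,
    smul_eq_mul]

theorem eval_linePoly_ofReal (x v : σ → ℝ) (s : ℝ) :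
    (linePoly p ((↑) ∘ x) ((↑) ∘ v)).eval (s : ℂ) = eval (s • v + x) p := by
  rw [eval_linePoly, ← aeval_ofReal_comp]
  congr 1
  ext i
  simp [add_comm]

theorem isRoot_linePoly_conj {x v : σ → ℝ} {z : ℂ}
    (hz : (linePoly p ((↑) ∘ x : σ → ℂ) ((↑) ∘ v)).IsRoot z) :
    (linePoly p ((↑) ∘ x : σ → ℂ) ((↑) ∘ v)).IsRoot (starRingEnd ℂ z) := by
  rw [Polynomial.IsRoot, eval_linePoly] at hz ⊢
  have h := comp_aeval_apply (Complex.conjAe : ℂ →ₐ[ℝ] ℂ) (f := ((↑) ∘ x + z • (↑) ∘ v)) p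
  rw [hz, map_zero] at h
  rw [h]
  congr 1
  ext i
  simp

theorem Continuous.coeff_linePoly {Y : Type*} [TopologicalSpace Y] {g : Y → σ → ℂ}
    (hg : Continuous g) (v : σ → ℂ) (k : ℕ) :
    Continuous fun y => (linePoly p (g y) v).coeff k := by
  induction p using MvPolynomial.induction_on generalizing k with
  | C a => simpa [linePoly] using continuous_const
  | add p q hp hq =>
    simp only [linePoly, map_add, Polynomial.coeff_add]
    exact (hp k).add (hq k)
  | mul_X p i hp =>
    have hlin : ∀ (f : ℂ[X]) (a b : ℂ),
        f * (Polynomial.C a + Polynomial.X * Polynomial.C b) =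
          f * Polynomial.C a + Polynomial.X * (f * Polynomial.C b) := fun _ _ _ => by ring
    simp only [linePoly, map_mul, aeval_X, hlin, Polynomial.coeff_add,
      Polynomial.coeff_mul_C] at hp ⊢
    have hgi : Continuous fun y => g y i := (continuous_apply i).comp hg
    cases k with
    | zero =>
      simp only [Polynomial.coeff_X_mul_zero, add_zero]
      exact (hp 0).mul hgi
    | succ k =>
      simp only [Polynomial.coeff_X_mul, Polynomial.coeff_mul_C]
      exact ((hp (k + 1)).mul hgi).add ((hp k).mul continuous_const)

variable {m : ℕ} (hp : p.IsHomogeneous m)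
include hp

theorem natDegree_linePoly_le (u v : σ → ℂ) : (linePoly p u v).natDegree ≤ m :=
  hp.natDegree_aeval_le fun i => by
    rw [Polynomial.natDegree_C_add]
    exact (Polynomial.natDegree_mul_C_le _ _).trans Polynomial.natDegree_X_le

theorem reflect_linePoly (u v : σ → ℂ) : (linePoly p u v).reflect m = linePoly p v u := by
  refine Polynomial.eq_of_infinite_eval_eq _ _ ((Set.finite_singleton 0).infinite_compl.mono ?_)
  intro z (hz : z ≠ 0)
  have : Invertible z⁻¹ := invertibleOfNonzero (inv_ne_zero hz)
  have h := Polynomial.eval₂_reflect_mul_pow (RingHom.id ℂ) z⁻¹ m _ (natDegree_linePoly_le hp u v)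
  rw [invOf_eq_inv, inv_inv, Polynomial.eval₂_id, Polynomial.eval₂_id, eval_linePoly] at h
  show _ = (linePoly p v u).eval z
  calc ((linePoly p u v).reflect m).eval z
      = z ^ m * (((linePoly p u v).reflect m).eval z * z⁻¹ ^ m) := by
        rw [inv_pow, mul_left_comm, mul_inv_cancel₀ (pow_ne_zero _ hz), mul_one]
    _ = (linePoly p v u).eval z := by
        rw [h, ← hp.aeval_smul, eval_linePoly, smul_add, smul_smul, mul_inv_cancel₀ hz, one_smul,
          add_comm]

theorem coeff_linePoly (u v : σ → ℂ) : (linePoly p u v).coeff m = aeval v p := by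
  nth_rewrite 1 [← Nat.sub_zero m, ← Polynomial.revAt_le (Nat.zero_le m)]
  rw [← Polynomial.coeff_reflect, reflect_linePoly hp, Polynomial.coeff_zero_eq_eval_zero,
    eval_linePoly, zero_smul, add_zero]

variable {Y : Type*} [TopologicalSpace Y] {g : Y → σ → ℂ} {v : σ → ℂ}

theorem isClosed_setOf_exists_isRoot_linePoly [SequentialSpace Y] (hg : Continuous g)
    (hv : aeval v p ≠ 0) {C : Set ℂ} (hC : IsClosed C) :
    IsClosed {y | ∃ z ∈ C, (linePoly p (g y) v).IsRoot z} :=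
  isClosed_setOf_exists_isRoot_mem (fun _ => natDegree_linePoly_le hp _ _)
    (fun _ => coeff_linePoly hp _ _) (hg.coeff_linePoly v) hv hC

theorem isOpen_setOf_exists_isRoot_linePoly (hg : Continuous g) (hv : aeval v p ≠ 0)
    {U : Set ℂ} (hU : IsOpen U) : IsOpen {y | ∃ z ∈ U, (linePoly p (g y) v).IsRoot z} :=
  isOpen_setOf_exists_isRoot_mem (fun _ => natDegree_linePoly_le hp _ _)
    (fun _ => coeff_linePoly hp _ _) (hg.coeff_linePoly v) hv hU

end LinePoly

namespace IsEigen

variable {n m : ℕ} {p : MvPolynomial (Fin n) ℝ} {a x : Fin n → ℝ} {lam mu : Fin m → ℝ}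

theorem eval_eq (hl : IsEigen m p a x lam) : eval x p = eval a p * ∏ k, lam k := by
  simpa using hl 0

theorem comp_perm (hl : IsEigen m p a x lam) (e : Equiv.Perm (Fin m)) :
    IsEigen m p a x (lam ∘ e) := fun t => by
  rw [hl t, ← Equiv.prod_comp e (fun k => t + lam k)]
  rfl

theorem add_smul (hl : IsEigen m p a x lam) (c : ℝ) :
    IsEigen m p a (x + c • a) (fun k => lam k + c) := fun t => by
  rw [show t • a + (x + c • a) = (t + c) • a + x by module, hl (t + c)]
  exact congrArg _ (Finset.prod_congr rfl fun k _ => by ring)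

theorem smul (hp : p.IsHomogeneous m) (hl : IsEigen m p a x lam) (c : ℝ) :
    IsEigen m p a (c • x) (fun k => c * lam k) := fun t => by
  rcases eq_or_ne c 0 with rfl | hc
  · simp [hp.eval_smul, mul_comm]
  · rw [show t • a + c • x = c • ((t / c) • a + x) by
        rw [smul_add, smul_smul, mul_div_cancel₀ t hc],
      hp.eval_smul, hl, mul_left_comm, ← Fin.prod_const, ← Finset.prod_mul_distrib]
    congr 1
    refine Finset.prod_congr rfl fun k _ => ?_
    field_simp

theorem linePoly_eq (hl : IsEigen m p a x lam) :
    linePoly p ((↑) ∘ x) ((↑) ∘ a) =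
      Polynomial.C (eval a p : ℂ) * ∏ k, (Polynomial.X + Polynomial.C (lam k : ℂ)) := by
  refine Polynomial.eq_of_infinite_eval_eq _ _
    ((Set.infinite_range_of_injective Complex.ofReal_injective).mono ?_)
  rintro - ⟨t, rfl⟩
  rw [Set.mem_ofPred_eq, eval_linePoly_ofReal, hl t]
  simp [Polynomial.eval_prod]

theorem isRoot_linePoly_iff (hl : IsEigen m p a x lam) (ha : eval a p ≠ 0) {z : ℂ} :
    (linePoly p ((↑) ∘ x) ((↑) ∘ a)).IsRoot z ↔ ∃ k, z = -lam k := by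
  simp [hl.linePoly_eq, Polynomial.eval_prod, Finset.prod_eq_zero_iff, ha,
    eq_neg_iff_add_eq_zero]

theorem map_univ_eq (ha : eval a p ≠ 0) (hl : IsEigen m p a x lam) (hμ : IsEigen m p a x mu) :
    Finset.univ.val.map lam = Finset.univ.val.map mu := by
  have hprod : ∏ k, (Polynomial.X + Polynomial.C (lam k)) =
      ∏ k, (Polynomial.X + Polynomial.C (mu k)) :=
    Polynomial.funext fun t => by
      simpa [Polynomial.eval_prod, ha] using (hl t).symm.trans (hμ t)
  have hroots : ∀ ν : Fin m → ℝ, (∏ k, (Polynomial.X + Polynomial.C (ν k))).roots =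
      Finset.univ.val.map (-ν ·) := fun ν => by
    rw [Polynomial.roots_prod _ _
      (Finset.prod_ne_zero_iff.2 fun k _ => Polynomial.X_add_C_ne_zero _)]
    simp [Polynomial.roots_X_add_C, Multiset.bind_singleton]
  have h := congrArg (Multiset.map Neg.neg)
    (hroots lam ▸ hroots mu ▸ congrArg Polynomial.roots hprod)
  simpa [Multiset.map_map, Function.comp_def] using h

theorem eq_of_monotone (ha : eval a p ≠ 0) (hl : IsEigen m p a x lam) (hμ : IsEigen m p a x mu)
    (hlm : Monotone lam) (hμm : Monotone mu) : lam = mu := by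
  have hperm := Multiset.coe_eq_coe.1 (by simpa using hl.map_univ_eq ha hμ)
  exact List.ofFn_injective (hperm.eq_of_sortedLE hlm.sortedLE_ofFn hμm.sortedLE_ofFn)

end IsEigen

section GardingCone

variable {n m : ℕ} {p : MvPolynomial (Fin n) ℝ} {c : Fin n → ℝ}

theorem exists_isEigen_of_forall_isRoot_im_eq_zero (hp : p.IsHomogeneous m)
    (hc : eval c p ≠ 0) {y : Fin n → ℝ}
    (hreal : ∀ z, (linePoly p ((↑) ∘ y) ((↑) ∘ c)).IsRoot z → z.im = 0) :
    ∃ lam : Fin m → ℝ, IsEigen m p c y lam := by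
  set q := linePoly p ((↑) ∘ y) ((↑) ∘ c : Fin n → ℂ)
  have hcoeff : q.coeff m = eval c p := by rw [coeff_linePoly hp, aeval_ofReal_comp]
  have hdeg : q.natDegree = m := Polynomial.natDegree_eq_of_le_of_coeff_ne_zero
    (natDegree_linePoly_le hp _ _) (by rw [hcoeff]; exact_mod_cast hc)
  have hsplit := IsAlgClosed.splits q
  obtain ⟨l, hl⟩ : ∃ l : List ℂ, (l : Multiset ℂ) = q.roots := Quotient.exists_rep _
  have hlen : l.length = m := by
    rw [← hdeg, hsplit.natDegree_eq_card_roots, ← hl, Multiset.coe_card]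
  subst hlen
  refine ⟨fun k => -(l.get k).re, fun t => Complex.ofReal_injective ?_⟩
  have hl_real : ∀ k, ((l.get k).re : ℂ) = l.get k := fun k => by
    have hmem : l.get k ∈ q.roots := by rw [← hl, Multiset.mem_coe]; exact List.get_mem l k
    exact Complex.ext rfl (by rw [Complex.ofReal_im, hreal _ (Polynomial.isRoot_of_mem_roots hmem)])
  rw [← eval_linePoly_ofReal, hsplit.eval_eq_prod_roots, Polynomial.leadingCoeff, hdeg, hcoeff,
    ← hl, Multiset.map_coe, Multiset.prod_coe, ← Fin.prod_univ_fun_getElem]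
  push_cast
  simp only [← List.get_eq_getElem, hl_real, sub_eq_add_neg]

theorem mem_gardingCone_self (hp : p.IsHomogeneous m) : c ∈ GardingCone m p c := by
  refine ⟨fun _ => 1, fun t => ?_, fun _ => one_pos⟩
  rw [show t • c + c = (t + 1) • c by module, hp.eval_smul, Fin.prod_const, mul_comm]

theorem starConvex_gardingCone (hp : p.IsHomogeneous m) :
    StarConvex ℝ c (GardingCone m p c) := by
  rintro x ⟨lam, hl, hpos⟩ θ τ hθ hτ hsum
  refine ⟨fun k => τ * lam k + θ, by simpa [add_comm] using (hl.smul hp τ).add_smul θ,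
    fun k => ?_⟩
  nlinarith [hpos k, mul_nonneg hτ (hpos k).le]

end GardingCone

namespace IsHyperbolic

open Complex

variable {n m : ℕ} {p : MvPolynomial (Fin n) ℝ} {a b c x y : Fin n → ℝ} {lam : Fin m → ℝ}

theorem eval_pos_of_mem (hyp : IsHyperbolic m p a) (hb : b ∈ GardingCone m p a) :
    0 < eval b p := by
  obtain ⟨lam, hl, hpos⟩ := hb
  rw [hl.eval_eq]
  exact mul_pos hyp.1 (Finset.prod_pos fun k _ => hpos k)

theorem ordEig_spec (hyp : IsHyperbolic m p a) (x : Fin n → ℝ) :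
    Monotone (ordEig m p a x) ∧ IsEigen m p a x (ordEig m p a x) := by
  have hex : ∃ lam : Fin m → ℝ, Monotone lam ∧ IsEigen m p a x lam := by
    obtain ⟨lam, hl⟩ := hyp.2 x
    exact ⟨lam ∘ Tuple.sort lam, Tuple.monotone_sort lam, hl.comp_perm _⟩
  rw [ordEig, dif_pos hex]
  exact hex.choose_spec

theorem ordEig_eq (hyp : IsHyperbolic m p a) (hlm : Monotone lam) (hl : IsEigen m p a x lam) :
    ordEig m p a x = lam :=
  (hyp.ordEig_spec x).2.eq_of_monotone hyp.1.ne' hl (hyp.ordEig_spec x).1 hlm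

theorem mem_gardingCone_iff (hyp : IsHyperbolic m p c) :
    x ∈ GardingCone m p c ↔ ∀ s : ℝ, 0 ≤ s → eval (s • c + x) p ≠ 0 := by
  obtain ⟨lam, hl⟩ := hyp.2 x
  refine ⟨fun ⟨mu, hmu, hpos⟩ s hs => ?_, fun h => ⟨lam, hl, fun k => ?_⟩⟩
  · rw [hmu s]
    exact mul_ne_zero hyp.1.ne' (Finset.prod_ne_zero_iff.2 fun k _ => by linarith [hpos k])
  · by_contra! hk
    refine h (-lam k) (by linarith) ?_
    rw [hl]
    exact mul_eq_zero_of_right _ (Finset.prod_eq_zero (Finset.mem_univ k) (by ring))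

theorem aeval_add_smul_ne_zero (hyp : IsHyperbolic m p a) (y : Fin n → ℝ) {s : ℂ}
    (hs : s.im ≠ 0) : aeval ((↑) ∘ y + s • (↑) ∘ a : Fin n → ℂ) p ≠ 0 := by
  obtain ⟨lam, hl⟩ := hyp.2 y
  intro h
  obtain ⟨k, rfl⟩ :=
    (hl.isRoot_linePoly_iff hyp.1.ne').1 (by rwa [Polynomial.IsRoot, eval_linePoly])
  simp at hs

theorem im_ne_zero_of_isRoot_linePoly_add_I_smul (hyp : IsHyperbolic m p a) (u : Fin n → ℝ)
    {t : ℂ} (ht : (linePoly p ((↑) ∘ u + I • (↑) ∘ a) ((↑) ∘ b)).IsRoot t) : t.im ≠ 0 := by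
  intro h0
  refine hyp.aeval_add_smul_ne_zero (u + t.re • b) (s := I) (by simp) ?_
  rw [Polynomial.IsRoot, eval_linePoly] at ht
  rw [← ht]
  congr 1
  ext i
  simp [Complex.ext_iff, h0]

theorem im_neg_of_isRoot_linePoly_I_smul (hp : p.IsHomogeneous m) (hyp : IsHyperbolic m p a)
    (hb : b ∈ GardingCone m p a) {t : ℂ}
    (ht : (linePoly p (I • (↑) ∘ a) ((↑) ∘ b)).IsRoot t) : t.im < 0 := by
  obtain ⟨lam, hl, hpos⟩ := hb
  rw [Polynomial.IsRoot, eval_linePoly] at ht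
  have ht0 : t ≠ 0 := by
    rintro rfl
    rw [zero_smul, add_zero, hp.aeval_smul, aeval_ofReal_comp] at ht
    simp [hyp.1.ne'] at ht
  -- `p(i a + t b) = t ^ m p(b + (i / t) a)`, so `i / t = -λₖ(b)`.
  have hroot : (linePoly p ((↑) ∘ b) ((↑) ∘ a)).IsRoot (I / t) := by
    rw [Polynomial.IsRoot, eval_linePoly]
    rw [show I • (↑) ∘ a + t • (↑) ∘ b = t • ((↑) ∘ b + (I / t) • (↑) ∘ a : Fin n → ℂ) by
      rw [smul_add, smul_smul, mul_div_cancel₀ _ ht0, add_comm], hp.aeval_smul] at ht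
    exact (mul_eq_zero.1 ht).resolve_left (pow_ne_zero _ ht0)
  obtain ⟨k, hk⟩ := (hl.isRoot_linePoly_iff hyp.1.ne').1 hroot
  rw [div_eq_iff ht0] at hk
  have ht_eq : t = -I / lam k := by
    rw [eq_div_iff (ofReal_ne_zero.2 (hpos k).ne')]
    linear_combination hk
  rw [ht_eq, neg_div, neg_im, div_ofReal_im, I_im, neg_lt_zero]
  exact one_div_pos.2 (hpos k)

theorem im_neg_of_isRoot_linePoly_add_I_smul (hp : p.IsHomogeneous m)
    (hyp : IsHyperbolic m p a) (hb : b ∈ GardingCone m p a) (u : Fin n → ℝ) {t : ℂ}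
    (ht : (linePoly p ((↑) ∘ u + I • (↑) ∘ a) ((↑) ∘ b)).IsRoot t) : t.im < 0 := by
  -- The set of `u` where a root lies in the closed upper half-plane is closed, and also open
  -- because no root is real. It misses `u = 0`, so it is empty as `ℝⁿ` is connected.
  set S := {u : Fin n → ℝ | ∃ z ∈ {z : ℂ | 0 ≤ z.im},
    (linePoly p ((↑) ∘ u + I • (↑) ∘ a) ((↑) ∘ b)).IsRoot z}
  have hg : Continuous fun u : Fin n → ℝ => ((↑) ∘ u + I • (↑) ∘ a : Fin n → ℂ) := by fun_prop
  have hpb := aeval_ofReal_comp_ne_zero (hyp.eval_pos_of_mem hb).ne'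
  have hS : S = {u | ∃ z ∈ {z : ℂ | 0 < z.im},
      (linePoly p ((↑) ∘ u + I • (↑) ∘ a) ((↑) ∘ b)).IsRoot z} :=
    Set.ext fun u => exists_congr fun z => and_congr_left fun hz =>
      ⟨fun (h : 0 ≤ z.im) => h.lt_of_ne' (hyp.im_ne_zero_of_isRoot_linePoly_add_I_smul u hz),
        fun (h : 0 < z.im) => h.le⟩
  have hclopen : IsClopen S :=
    ⟨isClosed_setOf_exists_isRoot_linePoly hp hg hpb (isClosed_le continuous_const continuous_im),
      hS ▸ isOpen_setOf_exists_isRoot_linePoly hp hg hpb (isOpen_lt continuous_const continuous_im)⟩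
  have h0 : (0 : Fin n → ℝ) ∉ S := by
    rintro ⟨z, hz, hroot⟩
    exact (im_neg_of_isRoot_linePoly_I_smul hp hyp hb (by simpa using hroot)).not_ge hz
  have hSempty := (isClopen_iff.1 hclopen).resolve_right fun h => h0 (h ▸ Set.mem_univ _)
  exact not_le.1 fun h => hSempty.subset ⟨t, h, ht⟩

theorem not_im_pos_of_isRoot_linePoly (hp : p.IsHomogeneous m) (hyp : IsHyperbolic m p a)
    (hb : b ∈ GardingCone m p a) {y : Fin n → ℝ} {z : ℂ}
    (hz : (linePoly p ((↑) ∘ y) ((↑) ∘ b)).IsRoot z) : ¬ 0 < z.im := by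
  -- A root in the upper half-plane survives replacing `y` by `y + i T a` for small `T > 0`;
  -- rescaling by `T` then contradicts `im_neg_of_isRoot_linePoly_add_I_smul`.
  intro hzim
  have hV := isOpen_setOf_exists_isRoot_linePoly hp
    (g := fun T : ℝ => ((↑) ∘ y + ((T : ℂ) * I) • (↑) ∘ a : Fin n → ℂ)) (by fun_prop)
    (aeval_ofReal_comp_ne_zero (hyp.eval_pos_of_mem hb).ne')
    (U := {w : ℂ | 0 < w.im}) (isOpen_lt continuous_const continuous_im)
  obtain ⟨ε, hε, hball⟩ := Metric.isOpen_iff.1 hV 0 ⟨z, hzim, by simpa using hz⟩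
  obtain ⟨w, hw : 0 < w.im, hroot⟩ := hball (show ε / 2 ∈ Metric.ball (0 : ℝ) ε by
    rw [mem_ball_zero_iff, Real.norm_of_nonneg (by positivity)]
    linarith)
  set T := ε / 2
  have hT : (T : ℂ) ≠ 0 := ofReal_ne_zero.2 (by positivity)
  have hscaled : (linePoly p ((↑) ∘ (T⁻¹ • y) + I • (↑) ∘ a) ((↑) ∘ b)).IsRoot (w / T) := by
    rw [Polynomial.IsRoot, eval_linePoly] at hroot ⊢
    have h := hp.aeval_smul (T : ℂ)⁻¹ ((↑) ∘ y + ((T : ℂ) * I) • (↑) ∘ a + w • (↑) ∘ b)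
    rw [hroot, mul_zero] at h
    rw [← h]
    congr 1
    ext i
    simp only [aeval_X, Pi.add_apply, Function.comp_apply, Pi.smul_apply, smul_eq_mul, ofReal_mul,
      ofReal_inv, smul_add]
    linear_combination (-(I * (a i : ℂ))) * mul_inv_cancel₀ hT
  have him := im_neg_of_isRoot_linePoly_add_I_smul hp hyp hb _ hscaled
  rw [div_ofReal_im] at him
  exact (div_pos hw (by positivity)).not_gt him

theorem of_mem (hp : p.IsHomogeneous m) (hyp : IsHyperbolic m p a)
    (hb : b ∈ GardingCone m p a) : IsHyperbolic m p b := by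
  refine ⟨hyp.eval_pos_of_mem hb, fun y => ?_⟩
  refine exists_isEigen_of_forall_isRoot_im_eq_zero hp (hyp.eval_pos_of_mem hb).ne'
    fun z hz => le_antisymm (not_lt.1 (hyp.not_im_pos_of_isRoot_linePoly hp hb hz)) ?_
  simpa using hyp.not_im_pos_of_isRoot_linePoly hp hb (isRoot_linePoly_conj hz)

theorem isOpen_gardingCone (hp : p.IsHomogeneous m) (hyp : IsHyperbolic m p c) :
    IsOpen (GardingCone m p c) := by
  have hC : IsClosed {z : ℂ | z.im = 0 ∧ 0 ≤ z.re} :=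
    (isClosed_eq continuous_im continuous_const).inter (isClosed_le continuous_const continuous_re)
  convert (isClosed_setOf_exists_isRoot_linePoly hp (g := fun x : Fin n → ℝ => (↑) ∘ x)
    (by fun_prop) (aeval_ofReal_comp_ne_zero hyp.1.ne') hC).isOpen_compl using 1
  ext x
  rw [hyp.mem_gardingCone_iff, Set.mem_compl_iff, Set.mem_ofPred_eq]
  constructor
  · rintro h ⟨z, ⟨hz0, hzre⟩, hroot⟩
    rw [show z = (z.re : ℂ) from Complex.ext rfl (by simp [hz0]), Polynomial.IsRoot,
      eval_linePoly_ofReal] at hroot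
    exact h z.re hzre (by exact_mod_cast hroot)
  · intro h s hs h0
    exact h ⟨s, ⟨ofReal_im s, by simpa using hs⟩,
      by rw [Polynomial.IsRoot, eval_linePoly_ofReal, h0, ofReal_zero]⟩

theorem isOpen_setOf_exists_pos_eval_eq_zero (hp : p.IsHomogeneous m)
    (hyp : IsHyperbolic m p c) : IsOpen {x | ∃ s : ℝ, 0 < s ∧ eval (s • c + x) p = 0} := by
  convert isOpen_setOf_exists_isRoot_linePoly hp (g := fun x : Fin n → ℝ => (↑) ∘ x)
    (by fun_prop) (aeval_ofReal_comp_ne_zero hyp.1.ne')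
    (isOpen_lt continuous_const continuous_re) using 1
  ext x
  constructor
  · rintro ⟨s, hs, h0⟩
    exact ⟨s, by simpa using hs, by rw [Polynomial.IsRoot, eval_linePoly_ofReal, h0, ofReal_zero]⟩
  · rintro ⟨z, hz, hroot⟩
    obtain ⟨lam, hl⟩ := hyp.2 x
    obtain ⟨k, rfl⟩ := (hl.isRoot_linePoly_iff hyp.1.ne').1 hroot
    refine ⟨-lam k, by simpa using hz, ?_⟩
    rw [Polynomial.IsRoot, ← ofReal_neg, eval_linePoly_ofReal] at hroot
    exact_mod_cast hroot

theorem gardingCone_eq_connectedComponentIn (hp : p.IsHomogeneous m)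
    (hyp : IsHyperbolic m p c) :
    GardingCone m p c = connectedComponentIn {x | eval x p ≠ 0} c := by
  have hsub : GardingCone m p c ⊆ {x | eval x p ≠ 0} := fun x hx => (hyp.eval_pos_of_mem hx).ne'
  refine subset_antisymm (((starConvex_gardingCone hp).isPathConnected
    (mem_gardingCone_self hp)).isConnected.isPreconnected.subset_connectedComponentIn
      (mem_gardingCone_self hp) hsub) ?_
  refine isPreconnected_connectedComponentIn.subset_left_of_subset_union
    (hyp.isOpen_gardingCone hp) (hyp.isOpen_setOf_exists_pos_eval_eq_zero hp) ?_ ?_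
    ⟨c, mem_connectedComponentIn (hsub (mem_gardingCone_self hp)), mem_gardingCone_self hp⟩
  · exact Set.disjoint_left.2 fun x hx ⟨s, hs, h0⟩ => hyp.mem_gardingCone_iff.1 hx s hs.le h0
  · intro x hx
    by_cases hV : x ∈ {x | ∃ s : ℝ, 0 < s ∧ eval (s • c + x) p = 0}
    · exact Or.inr hV
    refine Or.inl (hyp.mem_gardingCone_iff.2 fun s hs h0 => ?_)
    rcases hs.eq_or_lt with rfl | hs
    · exact connectedComponentIn_subset _ _ hx (by simpa using h0)
    · exact hV ⟨s, hs, h0⟩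

theorem gardingCone_eq_of_mem (hp : p.IsHomogeneous m) (hyp : IsHyperbolic m p a)
    (hb : b ∈ GardingCone m p a) : GardingCone m p b = GardingCone m p a := by
  have hb' : b ∈ connectedComponentIn {x | eval x p ≠ 0} a :=
    hyp.gardingCone_eq_connectedComponentIn hp ▸ hb
  rw [(hyp.of_mem hp hb).gardingCone_eq_connectedComponentIn hp,
    hyp.gardingCone_eq_connectedComponentIn hp, connectedComponentIn_eq hb']

theorem convex_gardingCone (hp : p.IsHomogeneous m) (hyp : IsHyperbolic m p a) :
    Convex ℝ (GardingCone m p a) := fun _ hx =>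
  hyp.gardingCone_eq_of_mem hp hx ▸ starConvex_gardingCone hp

theorem add_mem_gardingCone (hp : p.IsHomogeneous m) (hyp : IsHyperbolic m p a)
    (hx : x ∈ GardingCone m p a) (hy : y ∈ GardingCone m p a) : x + y ∈ GardingCone m p a := by
  obtain ⟨lam, hl, hpos⟩ := hyp.convex_gardingCone hp hx hy (by norm_num : (0 : ℝ) ≤ 1 / 2)
    (by norm_num : (0 : ℝ) ≤ 1 / 2) (by norm_num)
  refine ⟨fun k => 2 * lam k, ?_, fun k => by linarith [hpos k]⟩
  convert hl.smul hp 2 using 1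
  module

theorem ordEig_add_smul (hyp : IsHyperbolic m p a) (x : Fin n → ℝ) (c : ℝ) :
    ordEig m p a (x + c • a) = fun k => ordEig m p a x k + c :=
  hyp.ordEig_eq (fun _ _ hij => add_le_add_left ((hyp.ordEig_spec x).1 hij) c)
    ((hyp.ordEig_spec x).2.add_smul c)

theorem ordEig_smul (hp : p.IsHomogeneous m) (hyp : IsHyperbolic m p a) (x : Fin n → ℝ)
    {c : ℝ} (hc : 0 ≤ c) : ordEig m p a (c • x) = fun k => c * ordEig m p a x k :=
  hyp.ordEig_eq (fun _ _ hij => mul_le_mul_of_nonneg_left ((hyp.ordEig_spec x).1 hij) hc)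
    ((hyp.ordEig_spec x).2.smul hp c)

theorem ordEig_neg (hp : p.IsHomogeneous m) (hyp : IsHyperbolic m p a) (x : Fin n → ℝ) :
    ordEig m p a (-x) = fun k => -ordEig m p a x k.rev := by
  refine hyp.ordEig_eq (fun _ _ hij => neg_le_neg ((hyp.ordEig_spec x).1 (Fin.rev_le_rev.2 hij)))
    ?_
  simpa [Function.comp_def] using ((hyp.ordEig_spec x).2.smul hp (-1)).comp_perm Fin.revPerm

theorem mem_gardingCone_iff_ordEig_pos (hm : 0 < m) (hyp : IsHyperbolic m p a) :
    x ∈ GardingCone m p a ↔ 0 < ordEig m p a x ⟨0, hm⟩ := by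
  refine ⟨fun ⟨lam, hl, hpos⟩ => ?_, fun h => ⟨_, (hyp.ordEig_spec x).2, fun k =>
    h.trans_le ((hyp.ordEig_spec x).1 (Nat.zero_le k.val))⟩⟩
  have hmem : ordEig m p a x ⟨0, hm⟩ ∈ Finset.univ.val.map lam := by
    rw [← (hyp.ordEig_spec x).2.map_univ_eq hyp.1.ne' hl]
    exact Multiset.mem_map_of_mem _ (Finset.mem_univ_val _)
  obtain ⟨k, -, hk⟩ := Multiset.mem_map.1 hmem
  exact hk ▸ hpos k

theorem ordEig_zero_add_le (hm : 0 < m) (hp : p.IsHomogeneous m) (hyp : IsHyperbolic m p a)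
    (x y : Fin n → ℝ) :
    ordEig m p a x ⟨0, hm⟩ + ordEig m p a y ⟨0, hm⟩ ≤ ordEig m p a (x + y) ⟨0, hm⟩ := by
  set lmin := fun z => ordEig m p a z ⟨0, hm⟩
  refine le_of_forall_lt fun r hr => ?_
  set d := lmin x + lmin y - r
  have hx : x + (d / 2 - lmin x) • a ∈ GardingCone m p a := by
    rw [hyp.mem_gardingCone_iff_ordEig_pos hm, hyp.ordEig_add_smul]
    linarith
  have hy : y + (d / 2 - lmin y) • a ∈ GardingCone m p a := by
    rw [hyp.mem_gardingCone_iff_ordEig_pos hm, hyp.ordEig_add_smul]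
    linarith
  have hxy := hyp.add_mem_gardingCone hp hx hy
  rw [show x + (d / 2 - lmin x) • a + (y + (d / 2 - lmin y) • a) = x + y + (-r) • a by module,
    hyp.mem_gardingCone_iff_ordEig_pos hm, hyp.ordEig_add_smul] at hxy
  linarith

theorem concaveOn_ordEig_zero (hm : 0 < m) (hp : p.IsHomogeneous m) (hyp : IsHyperbolic m p a) :
    ConcaveOn ℝ Set.univ (fun x => ordEig m p a x ⟨0, hm⟩) := by
  refine ⟨convex_univ, fun x _ y _ θ τ hθ hτ _ => ?_⟩
  have hsmul := fun (c : ℝ) (hc : 0 ≤ c) (z : Fin n → ℝ) =>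
    congrFun (hyp.ordEig_smul hp z hc) ⟨0, hm⟩
  simp only [smul_eq_mul, ← hsmul θ hθ, ← hsmul τ hτ]
  exact hyp.ordEig_zero_add_le hm hp _ _

theorem convexOn_ordEig_last (hm : 0 < m) (hp : p.IsHomogeneous m) (hyp : IsHyperbolic m p a) :
    ConvexOn ℝ Set.univ (fun x => ordEig m p a x ⟨m - 1, Nat.sub_lt hm one_pos⟩) := by
  have hrev : Fin.rev (⟨0, hm⟩ : Fin m) = ⟨m - 1, Nat.sub_lt hm one_pos⟩ :=
    Fin.ext (by simp [Fin.val_rev])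
  have hmax : (fun x => ordEig m p a x ⟨m - 1, Nat.sub_lt hm one_pos⟩) =
      -(fun x => ordEig m p a x ⟨0, hm⟩) ∘ (-LinearMap.id : (Fin n → ℝ) →ₗ[ℝ] Fin n → ℝ) := by
    funext x
    simp [hyp.ordEig_neg hp, hrev]
  rw [hmax, ← Set.preimage_univ (f := (-LinearMap.id : (Fin n → ℝ) →ₗ[ℝ] Fin n → ℝ))]
  exact ((hyp.concaveOn_ordEig_zero hm hp).comp_linearMap _).neg

end IsHyperbolic

/-- (a) the Gårding cone is convex; (b) `λ_min = λ↑₁` is concave;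
(c) `λ_max = λ↑ₘ` is convex. -/
theorem garding_cone_convex_min_concave_max_convex
    {n m : ℕ} (hm : 0 < m) (p : MvPolynomial (Fin n) ℝ) (hp : p.IsHomogeneous m)
    (a : Fin n → ℝ) (hhyp : IsHyperbolic m p a) :
    Convex ℝ (GardingCone m p a) ∧
    ConcaveOn ℝ Set.univ (fun x : Fin n → ℝ => ordEig m p a x ⟨0, hm⟩) ∧
    ConvexOn ℝ Set.univ
      (fun x : Fin n → ℝ => ordEig m p a x ⟨m - 1, Nat.sub_lt hm one_pos⟩) :=
  ⟨hhyp.convex_gardingCone hp, hhyp.concaveOn_ordEig_zero hm hp, hhyp.convexOn_ordEig_last hm hp⟩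
end

section
/- Suppose p is a-hyperbolic of degree m with Gårding cone Γ, and let b ∈ Γ. Then for every t with 0 < t < ∞, p(a + t·b) ≤ p(a)·(1 + (p′_b(a)/(m·p(a)))·t)ᵐ, where p′_b(a) = (d/ds) p(a + s·b)|_{s=0}. Moreover equality holds for some (equivalently all) t > 0 if and only if all the a-eigenvalues of b are equal: λ₁(b) = λ₂(b) = ⋯ = λₘ(b). -/
/-!
Homogeneity turns the defining identity of the `a`-eigenvalues `λₖ` of `b` into
`p(a + t·b) = p(a)·∏ₖ (1 + t·λₖ)`, and differentiating at `t = 0` gives `p′_b(a) = p(a)·∑ₖ λₖ`.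
The inequality is therefore AM-GM for the positive numbers `1 + t·λₖ`, with equality exactly when
the `λₖ` coincide. Since `p(a) ≠ 0`, a constant eigenvalue tuple `c` forces every other tuple to
be constant too: each of its entries `μ` makes `(c - μ)ᵐ` vanish.
-/

open MvPolynomial

namespace Real

variable {ι : Type*} [Fintype ι]

theorem geom_mean_card_pow [Nonempty ι] {z : ι → ℝ} (hz : ∀ i, 0 ≤ z i) :
    (∏ i, z i ^ (Fintype.card ι : ℝ)⁻¹) ^ Fintype.card ι = ∏ i, z i := by
  rw [finsetProd_rpow _ _ (fun i _ => hz i),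
    rpow_inv_natCast_pow (Finset.prod_nonneg fun i _ => hz i) Fintype.card_ne_zero]

theorem prod_le_mean_pow_card {z : ι → ℝ} (hz : ∀ i, 0 ≤ z i) :
    ∏ i, z i ≤ ((∑ i, z i) / Fintype.card ι) ^ Fintype.card ι := by
  rcases isEmpty_or_nonempty ι with hι | hι
  · simp
  have hamgm := geom_mean_le_arith_mean_weighted Finset.univ (fun _ => (Fintype.card ι : ℝ)⁻¹) z
    (fun _ _ => by positivity) (by simp) (fun i _ => hz i)
  rw [← Finset.mul_sum, inv_mul_eq_div] at hamgm
  rw [← geom_mean_card_pow hz]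
  exact pow_le_pow_left₀ (Finset.prod_nonneg fun i _ => rpow_nonneg (hz i) _) hamgm _

theorem prod_eq_mean_pow_card_iff {z : ι → ℝ} (hz : ∀ i, 0 ≤ z i) :
    ∏ i, z i = ((∑ i, z i) / Fintype.card ι) ^ Fintype.card ι ↔ ∀ j k, z j = z k := by
  rcases isEmpty_or_nonempty ι with hι | hι
  · simp
  have hamgm := geom_mean_eq_arith_mean_weighted_iff_of_pos Finset.univ
    (fun _ => (Fintype.card ι : ℝ)⁻¹) z (fun _ _ => by positivity) (by simp) (fun i _ => hz i)
  rw [← Finset.mul_sum, inv_mul_eq_div] at hamgm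
  rw [← geom_mean_card_pow hz, pow_left_inj₀ (Finset.prod_nonneg fun i _ => rpow_nonneg (hz i) _)
    (div_nonneg (Finset.sum_nonneg fun i _ => hz i) (Nat.cast_nonneg _)) Fintype.card_ne_zero,
    hamgm]
  simp

end Real

theorem MvPolynomial.IsHomogeneous.eval_smul_s15 {σ R : Type*} [CommSemiring R]
    {p : MvPolynomial σ R} {m : ℕ} (hp : p.IsHomogeneous m) (c : R) (x : σ → R) :
    eval (c • x) p = c ^ m * eval x p := by
  rw [eval_eq, eval_eq, Finset.mul_sum]
  refine Finset.sum_congr rfl fun d hd => ?_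
  have hdeg : ∑ i ∈ d.support, d i = m := by
    simpa [Finsupp.weight_apply, Finsupp.sum] using hp (mem_support_iff.mp hd)
  simp only [Pi.smul_apply, smul_eq_mul, mul_pow, Finset.prod_mul_distrib,
    Finset.prod_pow_eq_pow_sum, hdeg]
  ring

namespace IsEigen

variable {n m : ℕ} {p : MvPolynomial (Fin n) ℝ} {a x : Fin n → ℝ} {lam : Fin m → ℝ}

theorem eval_add_smul (hp : p.IsHomogeneous m) (h : IsEigen m p a x lam) (s : ℝ) :
    eval (a + s • x) p = eval a p * ∏ k, (1 + s * lam k) := by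
  rcases eq_or_ne s 0 with rfl | hs
  · simp
  have hline : a + s • x = s • (s⁻¹ • a + x) := by
    rw [smul_add, smul_smul, mul_inv_cancel₀ hs, one_smul]
  rw [hline, hp.eval_smul_s15, h s⁻¹, mul_left_comm, ← Fin.prod_const m s, ← Finset.prod_mul_distrib]
  congr 1
  refine Finset.prod_congr rfl fun k _ => ?_
  field_simp

theorem dirDeriv_eq (hp : p.IsHomogeneous m) (h : IsEigen m p a x lam) :
    dirDeriv p a x = eval a p * ∑ k, lam k := by
  have hprod : HasDerivAt (fun s : ℝ => ∏ k, (1 + s * lam k)) (∑ k, lam k) 0 := by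
    have hfactor (k : Fin m) : HasDerivAt (fun s : ℝ => 1 + s * lam k) (lam k) 0 := by
      simpa using ((hasDerivAt_id (0 : ℝ)).mul_const (lam k)).const_add 1
    simpa using HasDerivAt.fun_finsetProd fun k _ => hfactor k
  unfold dirDeriv
  simp_rw [h.eval_add_smul hp]
  exact (hprod.const_mul (eval a p)).deriv

theorem eq_of_isEigen_const (h : IsEigen m p a x lam) {c : ℝ}
    (hc : IsEigen m p a x fun _ => c) (hpa : eval a p ≠ 0) (j : Fin m) : lam j = c := by
  have hroot := (h (-lam j)).symm.trans (hc (-lam j))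
  rw [Finset.prod_eq_zero (Finset.mem_univ j) (neg_add_cancel _), mul_zero, Fin.prod_const,
    eq_comm, mul_eq_zero, or_iff_right hpa, pow_eq_zero_iff j.pos.ne'] at hroot
  linarith

theorem forall_eq_iff (h : IsEigen m p a x lam) (hpa : eval a p ≠ 0) :
    (∀ lam' : Fin m → ℝ, IsEigen m p a x lam' → ∀ j k, lam' j = lam' k) ↔
      ∀ j k, lam j = lam k := by
  refine ⟨fun hall => hall lam h, fun hlam lam' h' j k => ?_⟩
  have hconst : IsEigen m p a x fun _ => lam j := by
    convert h using 1
    exact funext fun k => (hlam k j).symm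
  rw [h'.eq_of_isEigen_const hconst hpa, h'.eq_of_isEigen_const hconst hpa]

theorem one_add_dirDeriv_div_mul (hp : p.IsHomogeneous m) (h : IsEigen m p a x lam)
    (hpa : eval a p ≠ 0) (hm : m ≠ 0) (t : ℝ) :
    1 + dirDeriv p a x / (m * eval a p) * t = (∑ k, (1 + t * lam k)) / m := by
  rw [h.dirDeriv_eq hp, Finset.sum_add_distrib, ← Finset.mul_sum]
  simp only [Finset.sum_const, Finset.card_univ, Fintype.card_fin, nsmul_eq_mul, mul_one]
  field_simp

theorem eval_add_smul_le (hp : p.IsHomogeneous m) (h : IsEigen m p a x lam)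
    (hpa : 0 < eval a p) (hm : m ≠ 0) {t : ℝ} (ht : ∀ k, 0 ≤ 1 + t * lam k) :
    eval (a + t • x) p ≤ eval a p * (1 + dirDeriv p a x / (m * eval a p) * t) ^ m := by
  rw [h.eval_add_smul hp, h.one_add_dirDeriv_div_mul hp hpa.ne' hm]
  gcongr
  simpa using Real.prod_le_mean_pow_card ht

theorem eval_add_smul_eq_iff (hp : p.IsHomogeneous m) (h : IsEigen m p a x lam)
    (hpa : eval a p ≠ 0) (hm : m ≠ 0) {t : ℝ} (ht₀ : t ≠ 0) (ht : ∀ k, 0 ≤ 1 + t * lam k) :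
    eval (a + t • x) p = eval a p * (1 + dirDeriv p a x / (m * eval a p) * t) ^ m ↔
      ∀ j k, lam j = lam k := by
  rw [h.eval_add_smul hp, h.one_add_dirDeriv_div_mul hp hpa hm, mul_right_inj' hpa]
  simpa [ht₀] using Real.prod_eq_mean_pow_card_iff ht

end IsEigen

/-- Lemma B.1: for `b ∈ Γ` and `0 < t`,
`p(a + t·b) ≤ p(a)·(1 + (p′_b(a)/(m·p(a)))·t)ᵐ`, with equality for some
(equivalently all) `t > 0` iff all the `a`-eigenvalues of `b` are equal. -/
theorem basic_hyperbolic_inequality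
    {n m : ℕ} (hm : 1 ≤ m) (p : MvPolynomial (Fin n) ℝ) (hp : p.IsHomogeneous m)
    (a : Fin n → ℝ) (hhyp : IsHyperbolic m p a)
    (b : Fin n → ℝ) (hb : b ∈ GardingCone m p a) :
    (∀ t : ℝ, 0 < t →
      eval (a + t • b) p ≤
        eval a p * (1 + dirDeriv p a b / (m * eval a p) * t) ^ m) ∧
    ((∃ t : ℝ, 0 < t ∧
        eval (a + t • b) p =
          eval a p * (1 + dirDeriv p a b / (m * eval a p) * t) ^ m) ↔
      ∀ lam : Fin m → ℝ, IsEigen m p a b lam → ∀ j k : Fin m, lam j = lam k) ∧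
    ((∀ t : ℝ, 0 < t →
        eval (a + t • b) p =
          eval a p * (1 + dirDeriv p a b / (m * eval a p) * t) ^ m) ↔
      ∀ lam : Fin m → ℝ, IsEigen m p a b lam → ∀ j k : Fin m, lam j = lam k) := by
  obtain ⟨hpa, -⟩ := hhyp
  obtain ⟨lam, heig, hpos⟩ := hb
  have hm₀ : m ≠ 0 := by omega
  have hshift (t : ℝ) (ht : 0 < t) (k : Fin m) : 0 ≤ 1 + t * lam k := by
    have := hpos k
    positivity
  have heq (t : ℝ) (ht : 0 < t) :=
    heig.eval_add_smul_eq_iff hp hpa.ne' hm₀ ht.ne' (hshift t ht)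
  rw [heig.forall_eq_iff hpa.ne']
  exact ⟨fun t ht => heig.eval_add_smul_le hp hpa hm₀ (hshift t ht),
    ⟨fun ⟨t, ht, h⟩ => (heq t ht).1 h, fun h => ⟨1, one_pos, (heq 1 one_pos).2 h⟩⟩,
    ⟨fun h => (heq 1 one_pos).1 (h 1 one_pos), fun h t ht => (heq t ht).2 h⟩⟩
end
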